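/- arXiv:1906.00675 — 2 statements merged into one kernel-verified Lean document; each statement's English description precedes it below -/
import Mathlib

section
/- Let ε be a real-valued random variable on a probability space (Ω, μ) with E[ε] = 0 and E[ε²] = σ², and with ε square-integrable. Let y, u, v ∈ ℝ^m be a target and the two branch outputs, and a, b ∈ ℝ^m the branch derivatives. Then the expected linearized DKS loss satisfies E[ (1/2)‖(u + ε•a) − y‖² + (1/2)‖(v + ε•b) − y‖² + (1/2)‖(u + ε•a) − (v + ε•b)‖²] = (1/2)‖u − y‖² + (1/2)‖v − y‖² + (1/2)‖u − v‖² + (σ²/2)(‖a‖² + ‖b‖² + ‖a − b‖²). In particular, the expected linearized DKS loss exceeds the expected linearized DS loss E[(1/2)‖(u + ε•a) − y‖² + (1/2)‖(v + ε•b) − y‖²] by exactly (1/2)‖u − v‖² + (σ²/2)‖a − b‖², a term penalizing the inconsistency between the two branches' derivatives. -/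
/-!
After regrouping, each of the three losses is `½‖p + ε q‖²` with `(p, q)` one of
`(u - y, a)`, `(v - y, b)`, `(u - v, a - b)`. Expanding the square, the cross term
`2⟪p, q⟫ ε` has mean zero and the quadratic term has mean `σ²‖q‖²`, so each loss has
expectation `½‖p‖² + (σ²/2)‖q‖²`.
-/

open MeasureTheory

lemma norm_add_smul_sq {E : Type*} [NormedAddCommGroup E] [InnerProductSpace ℝ E]
    (p q : E) (t : ℝ) :
    ‖p + t • q‖ ^ 2 = ‖p‖ ^ 2 + 2 * inner ℝ p q * t + ‖q‖ ^ 2 * t ^ 2 := by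
  rw [norm_add_sq_real, real_inner_smul_right, norm_smul, mul_pow, Real.norm_eq_abs, sq_abs]
  ring

section RandomPerturbation

variable {Ω E : Type*} [MeasurableSpace Ω] {μ : Measure Ω} {ε : Ω → ℝ}
  [NormedAddCommGroup E] [InnerProductSpace ℝ E]

lemma integral_quadratic [IsProbabilityMeasure μ] (hε : MemLp ε 2 μ) (c₀ c₁ c₂ : ℝ) :
    ∫ ω, (c₀ + c₁ * ε ω + c₂ * ε ω ^ 2) ∂μ
      = c₀ + c₁ * ∫ ω, ε ω ∂μ + c₂ * ∫ ω, ε ω ^ 2 ∂μ := by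
  have hε1 : Integrable ε μ := hε.integrable one_le_two
  have hlin : Integrable (fun ω => c₀ + c₁ * ε ω) μ :=
    (integrable_const c₀).add (hε1.const_mul c₁)
  rw [integral_add hlin (hε.integrable_sq.const_mul c₂),
    integral_add (integrable_const c₀) (hε1.const_mul c₁), integral_const_mul, integral_const_mul,
    integral_const, probReal_univ, one_smul]

lemma integrable_norm_add_smul_sq [IsFiniteMeasure μ] (hε : MemLp ε 2 μ) (p q : E) :
    Integrable (fun ω => ‖p + ε ω • q‖ ^ 2) μ := by
  simp only [norm_add_smul_sq]
  exact ((integrable_const _).add ((hε.integrable one_le_two).const_mul _)).add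
    (hε.integrable_sq.const_mul _)

lemma integral_norm_add_smul_sq [IsProbabilityMeasure μ] {σ : ℝ} (hε : MemLp ε 2 μ)
    (hmean : ∫ ω, ε ω ∂μ = 0) (hvar : ∫ ω, ε ω ^ 2 ∂μ = σ ^ 2) (p q : E) :
    ∫ ω, ‖p + ε ω • q‖ ^ 2 ∂μ = ‖p‖ ^ 2 + σ ^ 2 * ‖q‖ ^ 2 := by
  simp only [norm_add_smul_sq]
  rw [integral_quadratic hε, hmean, hvar]
  ring

end RandomPerturbation

/-- Expected linearized DKS loss decomposition: it equals the expected linearized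
DS loss terms `½‖u − y‖² + ½‖v − y‖²` plus `½‖u − v‖²` plus
`(σ²/2)(‖a‖² + ‖b‖² + ‖a − b‖²)`; equivalently, it exceeds the expected
linearized DS loss by exactly `½‖u − v‖² + (σ²/2)‖a − b‖²`. -/
theorem expected_linearized_DKS_loss
    {Ω : Type*} [MeasurableSpace Ω] (μ : Measure Ω) [IsProbabilityMeasure μ]
    (ε : Ω → ℝ) (σ : ℝ)
    (hε2 : MemLp ε 2 μ)
    (hmean : ∫ ω, ε ω ∂μ = 0)
    (hvar : ∫ ω, (ε ω) ^ 2 ∂μ = σ ^ 2)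
    {m : ℕ} (y u v a b : EuclideanSpace ℝ (Fin m)) :
    (∫ ω, ((1 / 2 : ℝ) * ‖(u + ε ω • a) - y‖ ^ 2 + (1 / 2) * ‖(v + ε ω • b) - y‖ ^ 2
          + (1 / 2) * ‖(u + ε ω • a) - (v + ε ω • b)‖ ^ 2) ∂μ)
      = (1 / 2) * ‖u - y‖ ^ 2 + (1 / 2) * ‖v - y‖ ^ 2 + (1 / 2) * ‖u - v‖ ^ 2
          + (σ ^ 2 / 2) * (‖a‖ ^ 2 + ‖b‖ ^ 2 + ‖a - b‖ ^ 2) ∧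
    (∫ ω, ((1 / 2 : ℝ) * ‖(u + ε ω • a) - y‖ ^ 2
          + (1 / 2) * ‖(v + ε ω • b) - y‖ ^ 2
          + (1 / 2) * ‖(u + ε ω • a) - (v + ε ω • b)‖ ^ 2) ∂μ)
      = (∫ ω, ((1 / 2 : ℝ) * ‖(u + ε ω • a) - y‖ ^ 2
          + (1 / 2) * ‖(v + ε ω • b) - y‖ ^ 2) ∂μ)
          + ((1 / 2) * ‖u - v‖ ^ 2 + (σ ^ 2 / 2) * ‖a - b‖ ^ 2) := by
  have hy (w c : EuclideanSpace ℝ (Fin m)) (t : ℝ) : w + t • c - y = (w - y) + t • c :=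
    add_sub_right_comm w (t • c) y
  have huv (t : ℝ) : (u + t • a) - (v + t • b) = (u - v) + t • (a - b) := by
    rw [smul_sub]; abel
  simp only [hy, huv]
  have hint := integrable_norm_add_smul_sq (E := EuclideanSpace ℝ (Fin m)) hε2
  have hval := integral_norm_add_smul_sq (E := EuclideanSpace ℝ (Fin m)) hε2 hmean hvar
  set ds := fun ω => (1 / 2 : ℝ) * ‖(u - y) + ε ω • a‖ ^ 2 + (1 / 2) * ‖(v - y) + ε ω • b‖ ^ 2
  have hds_int : Integrable ds μ := ((hint _ _).const_mul _).add ((hint _ _).const_mul _)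
  have hDS : ∫ ω, ds ω ∂μ
      = (1 / 2) * (‖u - y‖ ^ 2 + σ ^ 2 * ‖a‖ ^ 2) + (1 / 2) * (‖v - y‖ ^ 2 + σ ^ 2 * ‖b‖ ^ 2) := by
    rw [integral_add ((hint _ _).const_mul _) ((hint _ _).const_mul _), integral_const_mul,
      integral_const_mul, hval, hval]
  rw [integral_add hds_int ((hint _ _).const_mul _), integral_const_mul, hval, hDS]
  constructor <;> ring
end

section
/- Let h : ℝ → ℝ be differentiable with derivative h' Lipschitz with constant L ≥ 0. Let ε be a real-valued random variable on a probability space (Ω, μ) with E[ε] = 0, E[ε²] = σ², and with E[|ε|³] and E[ε⁴] finite. Then for every z ∈ ℝ, the random variable h(z+ε)² is integrable and | E[ (1/2) h(z+ε)² ] − (1/2) h(z)² − (σ²/2) h'(z)² | ≤ (L/2)·|h(z)|·σ² + (L/2)·|h'(z)|·E[|ε|³] + (L²/8)·E[ε⁴]. (This is a rigorous form of the paper's Proposition for the difference function h = g₁ − g₂ of two branches: up to terms controlled by third and fourth moments of ε, the expected synergy term equals a term matching the branch outputs plus (σ²/2) times the squared difference of the branch derivatives at z.) -/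
/-!
Write `h (z + ε) = h z + ε h'(z) + r` with `|r| ≤ (L/2) ε²`, the first-order Taylor bound for a
function with `L`-Lipschitz derivative. Squaring, the quadratic polynomial in `ε` integrates to
`h(z)² + σ² h'(z)²` because `E[ε] = 0`, while the terms containing `r` are pointwise bounded by
`L |h z| ε² + L |h'(z)| |ε|³ + (L²/4) ε⁴`, whose expectation is the error term.
-/

open MeasureTheory
open scoped NNReal

theorem abs_sub_sub_mul_le_of_hasDerivAt_of_lipschitzWith {f f' : ℝ → ℝ} {K : ℝ≥0}
    (hf : ∀ x, HasDerivAt f (f' x) x) (hf' : LipschitzWith K f') (x e : ℝ) :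
    |f (x + e) - f x - e * f' x| ≤ K / 2 * e ^ 2 := by
  have hpath : ∀ s, HasDerivAt (fun s => f (x + s * e)) (f' (x + s * e) * e) s := fun s =>
    (hf _).comp s (((hasDerivAt_id s).mul_const e).const_add x |>.congr_deriv (one_mul e))
  have hcont : Continuous fun s => f' (x + s * e) := by
    have := hf'.continuous; fun_prop
  -- the segment is parametrised by `s ∈ [0, 1]` so that no case split on the sign of `e` is needed
  have hrepr : f (x + e) - f x - e * f' x = ∫ s in (0 : ℝ)..1, (f' (x + s * e) - f' x) * e := by
    rw [intervalIntegral.integral_mul_const, intervalIntegral.integral_sub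
      (hcont.intervalIntegrable _ _) intervalIntegrable_const, sub_mul,
      ← intervalIntegral.integral_mul_const, intervalIntegral.integral_eq_sub_of_hasDerivAt
      (fun s _ => hpath s) ((hcont.mul continuous_const).intervalIntegrable _ _)]
    simp [mul_comm e]
  have hbound : ∀ s ∈ Set.Ioc (0 : ℝ) 1, ‖(f' (x + s * e) - f' x) * e‖ ≤ K * e ^ 2 * s := by
    intro s hs
    have hlip := hf'.dist_le_mul (x + s * e) x
    rw [Real.dist_eq, Real.dist_eq, add_sub_cancel_left, abs_mul, abs_of_pos hs.1] at hlip
    rw [Real.norm_eq_abs, abs_mul]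
    calc |f' (x + s * e) - f' x| * |e| ≤ K * (s * |e|) * |e| := by gcongr
      _ = K * e ^ 2 * s := by rw [← sq_abs e]; ring
  calc |f (x + e) - f x - e * f' x| ≤ ∫ s in (0 : ℝ)..1, K * e ^ 2 * s := by
        rw [hrepr]
        exact intervalIntegral.norm_integral_le_of_norm_le zero_le_one
          (Filter.Eventually.of_forall hbound) ((continuous_const_mul _).intervalIntegrable _ _)
    _ = K / 2 * e ^ 2 := by
        rw [intervalIntegral.integral_const_mul, integral_id]; ring

theorem abs_half_sq_sub_le_of_abs_sub_sub_mul_le {x a b e c : ℝ}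
    (hx : |x - a - e * b| ≤ c * e ^ 2) :
    |1 / 2 * x ^ 2 - (1 / 2 * a ^ 2 + a * b * e + b ^ 2 / 2 * e ^ 2)|
      ≤ c * |a| * e ^ 2 + c * |b| * |e| ^ 3 + c ^ 2 / 2 * e ^ 4 := by
  set r := x - a - e * b
  have hexpand : 1 / 2 * x ^ 2 - (1 / 2 * a ^ 2 + a * b * e + b ^ 2 / 2 * e ^ 2)
      = a * r + b * e * r + 1 / 2 * r ^ 2 := by simp only [r]; ring
  have hr2 : r ^ 2 ≤ (c * e ^ 2) ^ 2 := sq_le_sq' (neg_le_of_abs_le hx) (le_of_abs_le hx)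
  rw [hexpand]
  calc |a * r + b * e * r + 1 / 2 * r ^ 2|
      ≤ |a| * |r| + |b| * |e| * |r| + 1 / 2 * r ^ 2 := by
        refine (abs_add_three _ _ _).trans ?_
        rw [abs_mul, abs_mul, abs_mul, abs_of_nonneg (by positivity : (0 : ℝ) ≤ 1 / 2 * r ^ 2)]
    _ ≤ |a| * (c * e ^ 2) + |b| * |e| * (c * e ^ 2) + 1 / 2 * (c * e ^ 2) ^ 2 := by gcongr
    _ = c * |a| * e ^ 2 + c * |b| * |e| ^ 3 + c ^ 2 / 2 * e ^ 4 := by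
        rw [show |e| ^ 3 = |e| * e ^ 2 by rw [← sq_abs e]; ring]; ring

section

variable {Ω : Type*} [MeasurableSpace Ω] {μ : Measure Ω} {f g b : Ω → ℝ}

theorem integrable_of_abs_sub_le (hf : AEStronglyMeasurable f μ) (hg : Integrable g μ)
    (hb : Integrable b μ) (hfg : ∀ᵐ ω ∂μ, |f ω - g ω| ≤ b ω) : Integrable f μ := by
  have hsub : Integrable (f - g) μ := hb.mono' (hf.sub hg.1) hfg
  simpa using hsub.add hg

theorem abs_integral_sub_le_of_abs_sub_le (hf : Integrable f μ) (hg : Integrable g μ)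
    (hb : Integrable b μ) (hfg : ∀ᵐ ω ∂μ, |f ω - g ω| ≤ b ω) :
    |∫ ω, f ω ∂μ - ∫ ω, g ω ∂μ| ≤ ∫ ω, b ω ∂μ := by
  rw [← integral_sub hf hg, ← Real.norm_eq_abs]
  exact norm_integral_le_of_norm_le hb hfg

end

/-- Rigorous form of the paper's Proposition for `h = g₁ − g₂` with scalar feature:
the expected synergy term `E[½ h(z+ε)²]` equals `½ h(z)² + (σ²/2) h'(z)²` up to an
error controlled by the third and fourth moments of `ε`. -/
theorem expected_synergy_taylor_scalar
    {Ω : Type*} [MeasurableSpace Ω] (μ : Measure Ω) [IsProbabilityMeasure μ]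
    (h : ℝ → ℝ) (hdiff : Differentiable ℝ h)
    (L : ℝ) (hL : 0 ≤ L) (hlip : LipschitzWith L.toNNReal (deriv h))
    (ε : Ω → ℝ) (σ : ℝ)
    (hεint : Integrable ε μ)
    (hε2int : Integrable (fun ω => (ε ω) ^ 2) μ)
    (hε3int : Integrable (fun ω => |ε ω| ^ 3) μ)
    (hε4int : Integrable (fun ω => (ε ω) ^ 4) μ)
    (hmean : ∫ ω, ε ω ∂μ = 0)
    (hvar : ∫ ω, (ε ω) ^ 2 ∂μ = σ ^ 2)
    (z : ℝ) :
    Integrable (fun ω => (h (z + ε ω)) ^ 2) μ ∧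
      |(∫ ω, (1 / 2 : ℝ) * (h (z + ε ω)) ^ 2 ∂μ)
          - (1 / 2) * (h z) ^ 2 - (σ ^ 2 / 2) * (deriv h z) ^ 2|
        ≤ (L / 2) * |h z| * σ ^ 2
          + (L / 2) * |deriv h z| * (∫ ω, |ε ω| ^ 3 ∂μ)
          + (L ^ 2 / 8) * (∫ ω, (ε ω) ^ 4 ∂μ) := by
  set a := h z
  set b := deriv h z
  have hpointwise : ∀ ω,
      |1 / 2 * h (z + ε ω) ^ 2 - (1 / 2 * a ^ 2 + a * b * ε ω + b ^ 2 / 2 * ε ω ^ 2)|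
        ≤ L / 2 * |a| * ε ω ^ 2 + L / 2 * |b| * |ε ω| ^ 3 + (L / 2) ^ 2 / 2 * ε ω ^ 4 := by
    intro ω
    apply abs_half_sq_sub_le_of_abs_sub_sub_mul_le
    simpa [Real.coe_toNNReal L hL] using abs_sub_sub_mul_le_of_hasDerivAt_of_lipschitzWith
      (fun x => (hdiff x).hasDerivAt) hlip z (ε ω)
  have hmeas : AEStronglyMeasurable (fun ω => 1 / 2 * h (z + ε ω) ^ 2) μ := by
    have := hdiff.continuous; have := hεint.aestronglyMeasurable; fun_prop
  have hquad : Integrable (fun ω => 1 / 2 * a ^ 2 + a * b * ε ω + b ^ 2 / 2 * ε ω ^ 2) μ := by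
    fun_prop
  have hbound : Integrable
      (fun ω => L / 2 * |a| * ε ω ^ 2 + L / 2 * |b| * |ε ω| ^ 3 + (L / 2) ^ 2 / 2 * ε ω ^ 4) μ := by
    fun_prop
  have hint := integrable_of_abs_sub_le hmeas hquad hbound (ae_of_all _ hpointwise)
  refine ⟨by simpa using hint.const_mul 2, ?_⟩
  have hineq := abs_integral_sub_le_of_abs_sub_le hint hquad hbound (ae_of_all _ hpointwise)
  have hquad_int : ∫ ω, (1 / 2 * a ^ 2 + a * b * ε ω + b ^ 2 / 2 * ε ω ^ 2) ∂μ
      = 1 / 2 * a ^ 2 + b ^ 2 / 2 * σ ^ 2 := by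
    rw [integral_add, integral_add]
    · simp [integral_const_mul, hmean, hvar]
    all_goals fun_prop
  have hbound_int :
      ∫ ω, (L / 2 * |a| * ε ω ^ 2 + L / 2 * |b| * |ε ω| ^ 3 + (L / 2) ^ 2 / 2 * ε ω ^ 4) ∂μ
        = L / 2 * |a| * σ ^ 2 + L / 2 * |b| * ∫ ω, |ε ω| ^ 3 ∂μ + L ^ 2 / 8 * ∫ ω, ε ω ^ 4 ∂μ := by
    rw [integral_add, integral_add]
    · simp only [integral_const_mul, hvar]; ring
    all_goals fun_prop
  rw [hquad_int, hbound_int] at hineq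
  convert hineq using 2
  ring
end
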